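/- Let N be an admissible algebra with nil-index ν and Hilbert function H(k) = dim(N^k/N^{k+1}). Then H(ν−1) ≤ H(1); more generally dim(N^k/N^ν) ≤ dim(N/N^{ν−k+1}) for all k with ν/2 < k < ν. -/

import Mathlib

/-!
Take a functional `π` nonzero on every nonzero element of the line `Ann(N)`. The form `π (x * y)` is
non-degenerate modulo `Ann(N)`: if `x ∉ Ann(N)`, multiplying `x` by suitable elements pushes it into
ever higher powers `N^m`, so before reaching `N^(ν+1) = 0` it lands on a nonzero element of `Ann(N)`.
Since `N^k · N^(ν-k+1) ⊆ N^(ν+1) = 0`, the form maps `N^k` into the dual of `N / N^(ν-k+1)` with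
kernel `N^k ∩ Ann(N)`, and `Ann(N) = N^ν` because `N^ν` is a nonzero subspace of the line `Ann(N)`.
-/

/-- `pw F N k` is the characteristic ideal `N^k`. -/
def pw (F N : Type*) [Field F] [NonUnitalNonAssocRing N] [Module F N] : ℕ → Submodule F N
  | 0 => ⊤
  | 1 => ⊤
  | (k+2) => Submodule.span F {z : N | ∃ x : N, ∃ y ∈ pw F N (k+1), z = x * y}

/-- The annihilator `Ann(N) = {x | x·N = 0}` of a commutative algebra `N`. -/
def annSub (F N : Type*) [Field F] [NonUnitalCommRing N] [Module F N]
    [SMulCommClass F N N] [IsScalarTower F N N] : Submodule F N where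
  carrier := {x | ∀ y : N, x * y = 0}
  add_mem' := by intro a b ha hb y; simp [add_mul, ha y, hb y]
  zero_mem' := by intro y; simp
  smul_mem' := by intro c x hx y; rw [smul_mul_assoc, hx y, smul_zero]

/-- `qdim F S T = dim (S / (S ∩ T))`, the dimension of the quotient of the submodule `S`
by (the pullback of) the submodule `T`. -/
noncomputable def qdim (F : Type*) {N : Type*} [Field F] [AddCommGroup N] [Module F N]
    (S T : Submodule F N) : ℕ :=
  Module.finrank F (↥S ⧸ Submodule.comap S.subtype T)

open Module Submodule

section LinearAlgebra

variable {F V : Type*} [Field F] [AddCommGroup V] [Module F V]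

theorem Submodule.exists_dual_ne_zero_of_finrank_eq_one (A : Submodule F V)
    (hA : finrank F A = 1) : ∃ π : Dual F V, ∀ a ∈ A, a ≠ 0 → π a ≠ 0 := by
  have : FiniteDimensional F A := Module.finite_of_finrank_eq_succ hA
  let e : A ≃ₗ[F] F := LinearEquiv.ofFinrankEq A F (by rw [hA, finrank_self])
  obtain ⟨π, hπ⟩ := LinearMap.exists_extend e.toLinearMap
  refine ⟨π, fun a ha ha0 => ?_⟩
  rw [show π a = e ⟨a, ha⟩ from LinearMap.congr_fun hπ ⟨a, ha⟩, e.map_ne_zero_iff]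
  exact ne_of_apply_ne Subtype.val ha0

variable [FiniteDimensional F V]

theorem qdim_top (T : Submodule F V) : qdim F ⊤ T = finrank F (V ⧸ T) := by
  have h₁ := (comap (⊤ : Submodule F V).subtype T).finrank_quotient_add_finrank
  have h₂ := T.finrank_quotient_add_finrank
  have h₃ := (comapSubtypeEquivOfLe (le_top : T ≤ ⊤)).finrank_eq
  rw [finrank_top] at h₁
  unfold qdim
  omega

theorem qdim_le_finrank_quotient_of_pairing (β : V →ₗ[F] V →ₗ[F] F) {S T W : Submodule F V}
    (hST : ∀ x ∈ S, ∀ y ∈ T, β x y = 0) (hW : ∀ x ∈ S, (∀ y, β x y = 0) → x ∈ W) :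
    qdim F S W ≤ finrank F (V ⧸ T) := by
  let f := β ∘ₗ S.subtype
  have hker : LinearMap.ker f ≤ W.comap S.subtype :=
    fun x hx => hW x x.2 fun y => LinearMap.congr_fun hx y
  have hrange : LinearMap.range f ≤ T.dualAnnihilator := by
    rintro _ ⟨x, rfl⟩
    exact (mem_dualAnnihilator _).2 fun y hy => hST x x.2 y hy
  calc qdim F S W ≤ finrank F (S ⧸ LinearMap.ker f) :=
        LinearMap.finrank_le_finrank_of_surjective (factor_surjective hker)
    _ = finrank F (LinearMap.range f) := f.quotKerEquivRange.finrank_eq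
    _ ≤ finrank F T.dualAnnihilator := finrank_mono hrange
    _ = finrank F (V ⧸ T) := (Subspace.quotEquivAnnihilator T).finrank_eq.symm

end LinearAlgebra

section Powers

variable {F N : Type*} [Field F]

section NonAssoc

variable [NonUnitalNonAssocRing N] [Module F N]

theorem pw_one : pw F N 1 = ⊤ := rfl

theorem pw_add_two (k : ℕ) :
    pw F N (k + 2) = span F {z : N | ∃ x : N, ∃ y ∈ pw F N (k + 1), z = x * y} := rfl

theorem mul_mem_pw_succ {m : ℕ} (x : N) {y : N} (hy : y ∈ pw F N m) : x * y ∈ pw F N (m + 1) :=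
  match m with
  | 0 => mem_top
  | _ + 1 => subset_span ⟨x, y, hy, rfl⟩

theorem pw_succ_le : ∀ k : ℕ, pw F N (k + 1) ≤ pw F N k
  | 0 => le_top
  | k + 1 => by
      rw [pw_add_two, span_le]
      rintro _ ⟨x, y, hy, rfl⟩
      exact mul_mem_pw_succ x (pw_succ_le k hy)

theorem pw_antitone : Antitone (pw F N) := antitone_nat_of_succ_le pw_succ_le

end NonAssoc

theorem mul_mem_pw_add [NonUnitalRing N] [Module F N] [IsScalarTower F N N] :
    ∀ (i : ℕ) {j : ℕ} {x y : N}, x ∈ pw F N i → y ∈ pw F N j → x * y ∈ pw F N (i + j)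
  | 0, j, x, _, _, hy => by simpa using pw_succ_le j (mul_mem_pw_succ x hy)
  | 1, j, x, _, _, hy => by simpa [add_comm] using mul_mem_pw_succ x hy
  | i + 2, j, x, y, hx, hy => by
      rw [pw_add_two] at hx
      induction hx using span_induction with
      | mem _ hz =>
          obtain ⟨u, v, hv, rfl⟩ := hz
          rw [mul_assoc, show i + 2 + j = i + 1 + j + 1 by omega]
          exact mul_mem_pw_succ u (mul_mem_pw_add (i + 1) hv hy)
      | zero => simp
      | add a b _ _ ha hb => simpa [add_mul] using add_mem ha hb
      | smul c a _ ha => simpa [smul_mul_assoc] using smul_mem _ c ha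

end Powers

section Annihilator

variable {F N : Type*} [Field F] [NonUnitalCommRing N] [Module F N]
  [SMulCommClass F N N] [IsScalarTower F N N] {ν : ℕ}

theorem mem_annSub {x : N} : x ∈ annSub F N ↔ ∀ y : N, x * y = 0 := Iff.rfl

theorem pw_le_annSub (hnil : pw F N (ν + 1) = ⊥) : pw F N ν ≤ annSub F N := by
  intro z hz y
  rw [mul_comm, ← mem_bot F, ← hnil]
  exact mul_mem_pw_succ y hz

theorem exists_mul_mem_annSub_ne_zero (hnil : pw F N (ν + 1) = ⊥) {x : N}
    (hx : x ∉ annSub F N) : ∃ y, x * y ∈ annSub F N ∧ x * y ≠ 0 := by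
  suffices H : ∀ n m, ν + 1 ≤ m + n → ∀ x ∈ pw F N m, x ∉ annSub F N →
      ∃ y, x * y ∈ annSub F N ∧ x * y ≠ 0 from H (ν + 1) 0 (by omega) x mem_top hx
  intro n
  induction n with
  | zero =>
      intro m hm x hxm hxA
      have hx0 : x ∈ (⊥ : Submodule F N) := hnil ▸ pw_antitone hm hxm
      exact absurd ((mem_bot F).1 hx0 ▸ zero_mem _) hxA
  | succ n ih =>
      intro m hm x hxm hxA
      obtain ⟨w, hw⟩ : ∃ w, x * w ≠ 0 := by simpa [mem_annSub] using hxA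
      by_cases hwA : x * w ∈ annSub F N
      · exact ⟨w, hwA, hw⟩
      · have hwm : x * w ∈ pw F N (m + 1) := mul_comm w x ▸ mul_mem_pw_succ w hxm
        obtain ⟨y, hy⟩ := ih (m + 1) (by omega) _ hwm hwA
        exact ⟨w * y, by rwa [← mul_assoc]⟩

theorem mem_annSub_of_forall_mul_eq_zero (hnil : pw F N (ν + 1) = ⊥) {π : Dual F N}
    (hπ : ∀ a ∈ annSub F N, a ≠ 0 → π a ≠ 0) {x : N} (hx : ∀ y, π (x * y) = 0) :
    x ∈ annSub F N := by
  by_contra hxA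
  obtain ⟨y, hyA, hy0⟩ := exists_mul_mem_annSub_ne_zero hnil hxA
  exact hπ _ hyA hy0 (hx y)

theorem pw_eq_annSub [FiniteDimensional F N] (hAnn : finrank F (annSub F N) = 1)
    (hnil : pw F N (ν + 1) = ⊥) (hne : pw F N ν ≠ ⊥) : pw F N ν = annSub F N :=
  eq_of_le_of_finrank_le (pw_le_annSub hnil) (hAnn ▸ one_le_finrank_iff.2 hne)

theorem qdim_pw_le [FiniteDimensional F N] (hAnn : finrank F (annSub F N) = 1)
    (hnil : pw F N (ν + 1) = ⊥) (hne : pw F N ν ≠ ⊥) (k : ℕ) :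
    qdim F (pw F N k) (pw F N ν) ≤ qdim F (pw F N 1) (pw F N (ν - k + 1)) := by
  obtain ⟨π, hπ⟩ := (annSub F N).exists_dual_ne_zero_of_finrank_eq_one hAnn
  rw [pw_eq_annSub hAnn hnil hne, pw_one, qdim_top]
  refine qdim_le_finrank_quotient_of_pairing ((LinearMap.mul F N).compr₂ π) ?_
    fun x _ hx => mem_annSub_of_forall_mul_eq_zero hnil hπ hx
  intro x hx y hy
  have hxy : x * y ∈ pw F N (ν + 1) := pw_antitone (by omega) (mul_mem_pw_add k hx hy)
  rw [hnil, mem_bot] at hxy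
  simp [hxy]

end Annihilator

theorem stmt17_general {F N : Type*} [Field F] [NonUnitalCommRing N] [Module F N]
    [SMulCommClass F N N] [IsScalarTower F N N] [FiniteDimensional F N]
    (hAnn : Module.finrank F (annSub F N) = 1)
    (ν : ℕ) (hnil : pw F N (ν + 1) = ⊥) (hne : pw F N ν ≠ ⊥) :
    (∀ k : ℕ, ν < 2 * k → k < ν →
        qdim F (pw F N k) (pw F N ν) ≤ qdim F (pw F N 1) (pw F N (ν - k + 1))) ∧
      qdim F (pw F N (ν - 1)) (pw F N ν) ≤ qdim F (pw F N 1) (pw F N 2) := by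
  refine ⟨fun k _ _ => qdim_pw_le hAnn hnil hne k, ?_⟩
  have hν : ν ≠ 0 := by
    rintro rfl
    exact hne hnil
  have h := qdim_pw_le hAnn hnil hne (ν - 1)
  rwa [show ν - (ν - 1) + 1 = 2 by omega] at h

/-- For an admissible algebra `N` with nil-index `ν` and Hilbert function
`H(k) = dim(N^k/N^{k+1})` one has `dim(N^k/N^ν) ≤ dim(N/N^{ν−k+1})` for all `ν/2 < k < ν`;
in particular `H(ν−1) ≤ H(1)`. -/
theorem stmt17 {F N : Type*} [Field F] [CharZero F] [NonUnitalCommRing N] [Module F N]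
    [SMulCommClass F N N] [IsScalarTower F N N] [FiniteDimensional F N]
    (hAnn : Module.finrank F (annSub F N) = 1)
    (ν : ℕ) (hnil : pw F N (ν + 1) = ⊥) (hne : pw F N ν ≠ ⊥) :
    (∀ k : ℕ, ν < 2 * k → k < ν →
        qdim F (pw F N k) (pw F N ν) ≤ qdim F (pw F N 1) (pw F N (ν - k + 1))) ∧
      qdim F (pw F N (ν - 1)) (pw F N ν) ≤ qdim F (pw F N 1) (pw F N 2) :=
  stmt17_general hAnn ν hnil hne
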